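/- arXiv:2010.03421 — 6 statements merged into one kernel-verified Lean document; each statement's English description precedes it below -/
import Mathlib

section
/- In the combinatorial horoball based on a graph Λ, for any level m ≥ 0 and vertices x, y of Λ, if the distance between (x,m) and (y,m) within the level-m subgraph (whose edges join vertices at Λ-distance at most 2^m) equals D, then the distance between (x,m+1) and (y,m+1) within the level-(m+1) subgraph equals ⌈D/2⌉. -/
/-- The combinatorial horoball based on a graph `Λ`: vertices are `Λ⁰ × ℕ`,
vertical edges join `(v,n)` to `(v,n+1)`, horizontal edges join `(v,n)` to `(w,n)`
whenever `0 < d_Λ(v,w) ≤ 2^n`. -/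
def horoball {V : Type*} (Λ : SimpleGraph V) : SimpleGraph (V × ℕ) where
  Adj a b := (a.1 = b.1 ∧ (a.2 + 1 = b.2 ∨ b.2 + 1 = a.2)) ∨
    (a.2 = b.2 ∧ a.1 ≠ b.1 ∧ Λ.dist a.1 b.1 ≤ 2 ^ a.2)
  symm := by
    constructor
    rintro ⟨x, m⟩ ⟨y, k⟩ (⟨h1, h2⟩ | ⟨h1, h2, h3⟩)
    · exact Or.inl ⟨h1.symm, h2.symm⟩
    · exact Or.inr ⟨h1.symm, h2.symm, by rwa [SimpleGraph.dist_comm, ← h1]⟩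
  loopless := by
    constructor
    rintro ⟨x, m⟩ (⟨_, h⟩ | ⟨_, h, _⟩) <;> simp_all

/-- The level-`n` subgraph of the combinatorial horoball on `Λ`, identified with a graph
on the vertices of `Λ`: it is the Rips graph `Rips_{2^n}(Λ)`, whose edges join distinct
vertices at `Λ`-distance at most `2^n`. -/
def ripsLevel {V : Type*} (Λ : SimpleGraph V) (n : ℕ) : SimpleGraph V where
  Adj v w := v ≠ w ∧ Λ.dist v w ≤ 2 ^ n
  symm := ⟨fun v w h => ⟨h.1.symm, by rw [SimpleGraph.dist_comm]; exact h.2⟩⟩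
  loopless := ⟨fun v h => h.1 rfl⟩

/-!
Both levels are Rips graphs of `Λ`, and in `Rips_r(Λ)` (for `r ≥ 1`) one has
`d ≤ c ↔ d_Λ ≤ r c`: a path of `c` Rips edges covers `Λ`-distance at most `r c`, and
conversely a `Λ`-geodesic of length at most `r c` can be cut into `c` pieces of length
at most `r`. Hence `d_{m+1} ≤ c ↔ d_Λ ≤ 2^m (2c) ↔ D ≤ 2c`, i.e. `d_{m+1} = ⌈D/2⌉`.
-/

open SimpleGraph

def ripsGraph {V : Type*} (Λ : SimpleGraph V) (r : ℕ) : SimpleGraph V where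
  Adj v w := v ≠ w ∧ Λ.dist v w ≤ r
  symm := ⟨fun v w h => ⟨h.1.symm, by rw [dist_comm]; exact h.2⟩⟩
  loopless := ⟨fun v h => h.1 rfl⟩

section RipsGraph

variable {V : Type*} {Λ : SimpleGraph V} {r : ℕ}

lemma ripsLevel_eq_ripsGraph (n : ℕ) : ripsLevel Λ n = ripsGraph Λ (2 ^ n) := rfl

lemma le_ripsGraph (hr : 0 < r) : Λ ≤ ripsGraph Λ r := fun _ _ h =>
  ⟨h.ne, (dist_eq_one_iff_adj.2 h).trans_le hr⟩

lemma connected_ripsGraph (hΛ : Λ.Connected) (hr : 0 < r) : (ripsGraph Λ r).Connected :=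
  hΛ.mono (le_ripsGraph hr)

lemma ripsGraph_dist_le_one {x y : V} (h : Λ.dist x y ≤ r) :
    (ripsGraph Λ r).dist x y ≤ 1 := by
  rcases eq_or_ne x y with rfl | hne
  · simp
  · exact (dist_eq_one_iff_adj.2 (show (ripsGraph Λ r).Adj x y from ⟨hne, h⟩)).le

lemma SimpleGraph.Connected.dist_le_mul_length_ripsGraph (hΛ : Λ.Connected) {x y : V}
    (q : (ripsGraph Λ r).Walk x y) : Λ.dist x y ≤ r * q.length := by
  induction q with
  | nil => simp
  | @cons x w y h q ih =>
    calc Λ.dist x y ≤ Λ.dist x w + Λ.dist w y := hΛ.dist_triangle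
      _ ≤ r + r * q.length := Nat.add_le_add h.2 ih
      _ = r * (q.cons h).length := by rw [Walk.length_cons]; ring

lemma SimpleGraph.Connected.ripsGraph_dist_le_of_length_le (hΛ : Λ.Connected) (hr : 0 < r)
    {c : ℕ} {x y : V} (p : Λ.Walk x y) (hp : p.length ≤ r * c) :
    (ripsGraph Λ r).dist x y ≤ c := by
  induction c generalizing x with
  | zero =>
    obtain rfl : x = y := Walk.eq_of_length_eq_zero (by simpa using hp)
    simp
  | succ c ih =>
    have hhead : (ripsGraph Λ r).dist x (p.getVert r) ≤ 1 :=
      ripsGraph_dist_le_one <| (dist_le (p.take r)).trans (by simp)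
    have htail : (ripsGraph Λ r).dist (p.getVert r) y ≤ c :=
      ih (p.drop r) (by rw [Walk.drop_length]; rw [Nat.mul_succ] at hp; omega)
    calc (ripsGraph Λ r).dist x y
        ≤ (ripsGraph Λ r).dist x (p.getVert r) + (ripsGraph Λ r).dist (p.getVert r) y :=
          (connected_ripsGraph hΛ hr).dist_triangle
      _ ≤ c + 1 := by omega

lemma SimpleGraph.Connected.ripsGraph_dist_le_iff (hΛ : Λ.Connected) (hr : 0 < r)
    {x y : V} {c : ℕ} :
    (ripsGraph Λ r).dist x y ≤ c ↔ Λ.dist x y ≤ r * c := by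
  constructor
  · intro h
    obtain ⟨q, hq⟩ := (connected_ripsGraph hΛ hr).exists_walk_length_eq_dist x y
    calc Λ.dist x y ≤ r * q.length := hΛ.dist_le_mul_length_ripsGraph q
      _ ≤ r * c := by rw [hq]; exact Nat.mul_le_mul_left r h
  · intro h
    obtain ⟨p, hp⟩ := hΛ.exists_walk_length_eq_dist x y
    exact hΛ.ripsGraph_dist_le_of_length_le hr p (hp ▸ h)

end RipsGraph

/-- If the distance between `(x,m)` and `(y,m)` within the level-`m` subgraph of the
combinatorial horoball is `D`, then the distance between `(x,m+1)` and `(y,m+1)` within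
the level-`(m+1)` subgraph is `⌈D/2⌉`. -/
theorem level_dist_halves {V : Type*} (Λ : SimpleGraph V) (hΛ : Λ.Connected)
    (m : ℕ) (x y : V) (D : ℕ) (hD : (ripsLevel Λ m).dist x y = D) :
    (ripsLevel Λ (m + 1)).dist x y = (D + 1) / 2 := by
  refine eq_of_forall_ge_iff fun c => ?_
  rw [ripsLevel_eq_ripsGraph] at hD ⊢
  rw [hΛ.ripsGraph_dist_le_iff (by positivity), pow_succ, mul_assoc,
    ← hΛ.ripsGraph_dist_le_iff (by positivity), hD]
  omega
end

section
/- In a combinatorial horoball on a connected graph Λ, any two vertices (x,k) and (y,ℓ) are joined by a geodesic whose image consists of at most two vertical segments and at most one horizontal segment. -/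
open SimpleGraph

section

variable {V : Type*} {Λ : SimpleGraph V}

def ripsLevelToHoroball (Λ : SimpleGraph V) (n : ℕ) : ripsLevel Λ n →g horoball Λ where
  toFun v := (v, n)
  map_rel' h := Or.inr ⟨rfl, h.1, h.2⟩

lemma SimpleGraph.Walk.exists_ripsLevel_walk_length_le {n q : ℕ} {x y : V} (p : Λ.Walk x y)
    (hp : p.length ≤ q * 2 ^ n) : ∃ w : (ripsLevel Λ n).Walk x y, w.length ≤ q := by
  induction q generalizing x with
  | zero =>
    obtain rfl := p.eq_of_length_eq_zero (by simpa using hp)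
    exact ⟨.nil, le_rfl⟩
  | succ q ih =>
    obtain ⟨w, hw⟩ := ih (p.drop (2 ^ n)) (by rw [Walk.drop_length]; rw [Nat.succ_mul] at hp; omega)
    by_cases hxz : x = p.getVert (2 ^ n)
    · exact ⟨w.copy hxz.symm rfl, by rw [Walk.length_copy]; omega⟩
    · have hdist : Λ.dist x (p.getVert (2 ^ n)) ≤ 2 ^ n :=
        (dist_le (p.take (2 ^ n))).trans (by rw [Walk.take_length]; exact min_le_left _ _)
      have hadj : (ripsLevel Λ n).Adj x (p.getVert (2 ^ n)) := ⟨hxz, hdist⟩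
      exact ⟨.cons hadj w, Nat.succ_le_succ hw⟩

lemma horoball_exists_horizontal_walk (hΛ : Λ.Connected) {x y : V} {m q : ℕ}
    (hdist : Λ.dist x y ≤ q * 2 ^ m) :
    ∃ w : (horoball Λ).Walk (x, m) (y, m), (∀ v ∈ w.support, v.2 = m) ∧ w.length ≤ q := by
  obtain ⟨r, hr⟩ := hΛ.exists_walk_length_eq_dist x y
  obtain ⟨w, hw⟩ := r.exists_ripsLevel_walk_length_le (hr ▸ hdist)
  refine ⟨w.map (ripsLevelToHoroball Λ m), fun v hv => ?_, (w.length_map _).trans_le hw⟩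
  have hv' : v ∈ w.support.map (ripsLevelToHoroball Λ m) := w.support_map _ ▸ hv
  obtain ⟨u, -, rfl⟩ := List.mem_map.1 hv'
  rfl

lemma horoball_adj_up (x : V) (n : ℕ) : (horoball Λ).Adj (x, n) (x, n + 1) :=
  Or.inl ⟨rfl, Or.inl rfl⟩

lemma horoball_exists_walk_up (x : V) {k m : ℕ} (hkm : k ≤ m) :
    ∃ p : (horoball Λ).Walk (x, k) (x, m), p.length = m - k := by
  induction m, hkm using Nat.le_induction with
  | base => exact ⟨.nil, by simp⟩
  | succ m hkm ih =>
    obtain ⟨p, hp⟩ := ih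
    exact ⟨p.concat (horoball_adj_up x m), by rw [Walk.length_concat, hp]; omega⟩

lemma horoball_exists_walk_via_level {x y : V} {k l m : ℕ} (hk : k ≤ m) (hl : l ≤ m)
    (w : (horoball Λ).Walk (x, m) (y, m)) :
    ∃ p : (horoball Λ).Walk (x, k) (y, l), p.length = (m - k) + w.length + (m - l) := by
  obtain ⟨up, hup⟩ := horoball_exists_walk_up (Λ := Λ) x hk
  obtain ⟨down, hdown⟩ := horoball_exists_walk_up (Λ := Λ) y hl
  refine ⟨up.append (w.append down.reverse), ?_⟩
  rw [Walk.length_append, Walk.length_append, Walk.length_reverse, hup, hdown, Nat.add_assoc]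

lemma horoball_connected (hΛ : Λ.Connected) : (horoball Λ).Connected := by
  have := hΛ.nonempty
  refine ⟨fun ⟨x, k⟩ ⟨y, l⟩ => ?_⟩
  obtain ⟨w, -⟩ := horoball_exists_horizontal_walk hΛ (m := max k l)
    (Nat.le_mul_of_pos_right _ (Nat.two_pow_pos _))
  obtain ⟨p, -⟩ := horoball_exists_walk_via_level (le_max_left k l) (le_max_right k l) w
  exact ⟨p⟩

lemma horoball_exists_level_le_length (hΛ : Λ.Connected) {a b : V × ℕ}
    (p : (horoball Λ).Walk a b) :
    ∃ m q, a.2 ≤ m ∧ b.2 ≤ m ∧ Λ.dist a.1 b.1 ≤ q * 2 ^ m ∧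
      (m - a.2) + q + (m - b.2) ≤ p.length := by
  induction p with
  | nil => exact ⟨_, 0, le_rfl, le_rfl, by simp, by simp⟩
  | @cons a c b h p ih =>
    obtain ⟨m, q, hcm, hbm, hdist, hlen⟩ := ih
    rw [Walk.length_cons]
    rcases h with ⟨hac, hup | hdown⟩ | ⟨hlevel, -, hstep⟩
    · exact ⟨m, q, by omega, hbm, hac ▸ hdist, by omega⟩
    · by_cases ham : a.2 ≤ m
      · exact ⟨m, q, ham, hbm, hac ▸ hdist, by omega⟩
      · have hpow : 2 ^ m ≤ 2 ^ a.2 := Nat.pow_le_pow_right two_pos (by omega)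
        exact ⟨a.2, q, le_rfl, by omega,
          hac ▸ hdist.trans (Nat.mul_le_mul_left q hpow), by omega⟩
    · have hpow : 2 ^ a.2 ≤ 2 ^ m := Nat.pow_le_pow_right two_pos (by omega)
      refine ⟨m, q + 1, by omega, hbm, ?_, by omega⟩
      calc Λ.dist a.1 b.1 ≤ Λ.dist a.1 c.1 + Λ.dist c.1 b.1 := hΛ.dist_triangle
        _ ≤ (q + 1) * 2 ^ m := by rw [Nat.succ_mul]; omega

end

/-- Any two vertices `(x,k)` and `(y,l)` of a combinatorial horoball are joined by a
geodesic consisting of at most two vertical segments and at most one horizontal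
segment: there is a level `m ≥ k, l` and a horizontal walk `w` at level `m` from
`(x,m)` to `(y,m)` such that the vertical segment from `(x,k)` up to `(x,m)`, followed
by `w`, followed by the vertical segment from `(y,m)` down to `(y,l)`, has total length
equal to the distance from `(x,k)` to `(y,l)`. -/
theorem horoball_geodesic_shape {V : Type*} (Λ : SimpleGraph V) (hΛ : Λ.Connected)
    (x y : V) (k l : ℕ) :
    ∃ m : ℕ, k ≤ m ∧ l ≤ m ∧ ∃ w : (horoball Λ).Walk (x, m) (y, m),
      (∀ v ∈ w.support, v.2 = m) ∧
      (m - k) + w.length + (m - l) = (horoball Λ).dist (x, k) (y, l) := by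
  obtain ⟨p, hp⟩ := (horoball_connected hΛ).exists_walk_length_eq_dist (x, k) (y, l)
  obtain ⟨m, q, hk, hl, hdist, hlen⟩ := horoball_exists_level_le_length hΛ p
  dsimp only at hk hl hdist hlen
  obtain ⟨w, hsupp, hw⟩ := horoball_exists_horizontal_walk hΛ hdist
  obtain ⟨s, hs⟩ := horoball_exists_walk_via_level hk hl w
  have hupper := hs ▸ dist_le s
  exact ⟨m, hk, hl, w, hsupp, by omega⟩
end

section
/- In a combinatorial horoball, no geodesic contains an ascending vertical segment immediately following a descending vertical segment: if a geodesic path descends from level m to a lower level, it never returns to level m. -/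
/-!
Suppose a geodesic is at level `m`, drops below it and comes back. Cut out a maximal excursion
strictly below level `m`, from time `p` to time `q`. It enters and leaves by vertical edges, and
its horizontal edges, all at levels `≤ m - 1`, move the base point by at most `2^(m-1)` each. So
the base points of its endpoints are at `Λ`-distance at most `(q - p - 2) · 2^m`, and a horizontal
walk at level `m` joins them in at most `q - p - 2` steps, which shortens the geodesic.
-/

open SimpleGraph

theorem Nat.exists_excursion_below {f : ℕ → ℕ} (hup : ∀ r, f (r + 1) ≤ f r + 1)
    (hdown : ∀ r, f r ≤ f (r + 1) + 1) {m i j l : ℕ} (hij : i ≤ j) (hjl : j ≤ l)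
    (hi : m ≤ f i) (hj : f j < m) (hl : m ≤ f l) :
    ∃ p q, p < j ∧ j < q ∧ f p = m ∧ f q = m ∧ ∀ r, p < r → r < q → f r < m := by
  have hex : ∃ t, j ≤ t ∧ m ≤ f t := ⟨l, hjl, hl⟩
  set p := Nat.findGreatest (fun t => m ≤ f t) j
  set q := Nat.find hex
  have hp : m ≤ f p := Nat.findGreatest_spec (P := fun t => m ≤ f t) hij hi
  have hq : j ≤ q ∧ m ≤ f q := Nat.find_spec hex
  have hbelow : ∀ r, p < r → r < q → f r < m := by
    intro r hpr hrq
    rcases le_or_gt r j with hrj | hjr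
    · exact lt_of_not_ge (Nat.findGreatest_is_greatest (P := fun t => m ≤ f t) hpr hrj)
    · exact lt_of_not_ge fun h => Nat.find_min hex hrq ⟨hjr.le, h⟩
  have hpj : p < j := (Nat.findGreatest_le j).lt_of_ne fun h => by
    rw [show p = j from h] at hp
    exact hp.not_gt hj
  have hjq : j < q := hq.1.lt_of_ne fun h => by
    rw [show j = q from h] at hj
    exact hq.2.not_gt hj
  refine ⟨p, q, hpj, hjq, ?_, ?_, hbelow⟩
  · have := hbelow (p + 1) (by omega) (by omega)
    have := hdown p
    omega
  · have := hbelow (q - 1) (by omega) (by omega)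
    have := hup (q - 1)
    rw [Nat.sub_add_cancel (by omega)] at this
    omega

namespace SimpleGraph.Walk

variable {V : Type*} {G : SimpleGraph V} {u v : V}

lemma getVert_succ_eq_or_adj (w : G.Walk u v) (i : ℕ) :
    w.getVert (i + 1) = w.getVert i ∨ G.Adj (w.getVert i) (w.getVert (i + 1)) := by
  rcases lt_or_ge i w.length with hi | hi
  · exact .inr (w.adj_getVert_succ hi)
  · exact .inl (by rw [w.getVert_of_length_le hi, w.getVert_of_length_le (by omega)])

lemma dist_getVert_getVert_of_length_eq_dist {w : G.Walk u v} (hw : w.length = G.dist u v)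
    {i j : ℕ} (hij : i ≤ j) (hj : j ≤ w.length) :
    G.dist (w.getVert i) (w.getVert j) = j - i := by
  have h := length_eq_dist_of_subwalk hw ((isSubwalk_take (w.drop i) (j - i)).trans
    (isSubwalk_drop w i))
  rw [take_length, drop_length, drop_getVert, Nat.add_sub_cancel' hij] at h
  omega

end SimpleGraph.Walk

section Horoball

variable {V : Type*} {Λ : SimpleGraph V}

lemma horoball_adj_fst_eq_of_snd_ne {a b : V × ℕ} (h : (horoball Λ).Adj a b)
    (hne : a.2 ≠ b.2) : a.1 = b.1 := by
  rcases h with ⟨h, _⟩ | ⟨h, _⟩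
  · exact h
  · exact absurd h hne

lemma horoball_adj_snd_le {a b : V × ℕ} (h : (horoball Λ).Adj a b) : b.2 ≤ a.2 + 1 := by
  rcases h with ⟨_, h | h⟩ | ⟨h, _⟩ <;> omega

lemma horoball_adj_dist_fst_le {a b : V × ℕ} (h : (horoball Λ).Adj a b) :
    Λ.dist a.1 b.1 ≤ 2 ^ a.2 := by
  rcases h with ⟨h, _⟩ | ⟨_, _, h⟩
  · simp [h]
  · exact h

lemma horoball_dist_le_of_dist_le (hΛ : Λ.Connected) {n k : ℕ} {x y : V}
    (h : Λ.dist x y ≤ k * 2 ^ n) : (horoball Λ).dist (x, n) (y, n) ≤ k := by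
  induction k generalizing x with
  | zero =>
    obtain rfl := hΛ.dist_eq_zero_iff.mp (Nat.eq_zero_of_le_zero (by simpa using h))
    simp
  | succ k ih =>
    obtain ⟨g, hg⟩ := hΛ.exists_walk_length_eq_dist x y
    set z := g.getVert (2 ^ n)
    have hxz : Λ.dist x z ≤ 2 ^ n := (dist_le (g.take (2 ^ n))).trans (by simp [Walk.take_length])
    have hzy : Λ.dist z y ≤ k * 2 ^ n := (dist_le (g.drop (2 ^ n))).trans (by
      rw [Walk.drop_length, hg]
      rw [Nat.succ_mul] at h
      omega)
    by_cases hxz' : x = z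
    · rw [hxz']
      exact (ih hzy).trans k.le_succ
    · have hadj : (horoball Λ).Adj (x, n) (z, n) := .inr ⟨rfl, hxz', hxz⟩
      calc (horoball Λ).dist (x, n) (y, n)
          ≤ (horoball Λ).dist (x, n) (z, n) + (horoball Λ).dist (z, n) (y, n) :=
            hadj.reachable.dist_triangle_left _
        _ ≤ k + 1 := by rw [dist_eq_one_iff_adj.mpr hadj]; have := ih hzy; omega

variable {a b : V × ℕ} (w : (horoball Λ).Walk a b)

lemma horoball_snd_getVert_succ_le (r : ℕ) : (w.getVert (r + 1)).2 ≤ (w.getVert r).2 + 1 := by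
  rcases w.getVert_succ_eq_or_adj r with h | h
  · rw [h]; omega
  · exact horoball_adj_snd_le h

lemma horoball_snd_getVert_le_succ (r : ℕ) : (w.getVert r).2 ≤ (w.getVert (r + 1)).2 + 1 := by
  rcases w.getVert_succ_eq_or_adj r with h | h
  · rw [h]; omega
  · exact horoball_adj_snd_le h.symm

lemma horoball_fst_getVert_succ_eq_of_snd_ne {r : ℕ}
    (hne : (w.getVert r).2 ≠ (w.getVert (r + 1)).2) : (w.getVert r).1 = (w.getVert (r + 1)).1 := by
  rcases w.getVert_succ_eq_or_adj r with h | h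
  · rw [h]
  · exact horoball_adj_fst_eq_of_snd_ne h hne

lemma horoball_dist_fst_getVert_succ_le (r : ℕ) :
    Λ.dist (w.getVert r).1 (w.getVert (r + 1)).1 ≤ 2 ^ (w.getVert r).2 := by
  rcases w.getVert_succ_eq_or_adj r with h | h
  · simp [h]
  · exact horoball_adj_dist_fst_le h

lemma horoball_dist_fst_getVert_le_of_snd_le (hΛ : Λ.Connected) {n s t : ℕ} (hst : s ≤ t)
    (hlevel : ∀ r, s ≤ r → r < t → (w.getVert r).2 ≤ n) :
    Λ.dist (w.getVert s).1 (w.getVert t).1 ≤ (t - s) * 2 ^ n := by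
  induction t, hst using Nat.le_induction with
  | base => simp
  | succ t hst ih =>
    have hstep : Λ.dist (w.getVert t).1 (w.getVert (t + 1)).1 ≤ 2 ^ n :=
      (horoball_dist_fst_getVert_succ_le w t).trans
        (Nat.pow_le_pow_right two_pos (hlevel t hst t.lt_succ_self))
    calc Λ.dist (w.getVert s).1 (w.getVert (t + 1)).1
        ≤ Λ.dist (w.getVert s).1 (w.getVert t).1 + Λ.dist (w.getVert t).1 (w.getVert (t + 1)).1 :=
          hΛ.dist_triangle
      _ ≤ (t - s) * 2 ^ n + 2 ^ n :=
          add_le_add (ih fun r h₁ h₂ => hlevel r h₁ (by omega)) hstep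
      _ = (t + 1 - s) * 2 ^ n := by rw [Nat.sub_add_comm hst, Nat.succ_mul]

end Horoball

/-- In a combinatorial horoball, no geodesic ascends after descending: if a geodesic
walk is at level `m` at time `i` and strictly below level `m` at a later time `j`,
then it stays strictly below level `m` at all times `l ≥ j`; i.e. having descended
from level `m`, it never returns to level `m`. -/
theorem horoball_geodesic_no_descend_ascend {V : Type*} (Λ : SimpleGraph V)
    (hΛ : Λ.Connected) {a b : V × ℕ} (w : (horoball Λ).Walk a b)
    (hgeo : w.length = (horoball Λ).dist a b) (m : ℕ) :
    ∀ i j l : ℕ, i ≤ j → j ≤ l →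
      (w.getVert i).2 = m → (w.getVert j).2 < m → (w.getVert l).2 < m := by
  intro i j l hij hjl him hjm
  by_contra! hlm
  obtain ⟨p, q, hpj, hjq, hp, hq, hbelow⟩ := Nat.exists_excursion_below
    (f := fun r => (w.getVert r).2) (horoball_snd_getVert_succ_le w)
    (horoball_snd_getVert_le_succ w) hij hjl him.ge hjm hlm
  obtain ⟨n, rfl⟩ : ∃ n, m = n + 1 := ⟨m - 1, by omega⟩
  obtain ⟨q, rfl⟩ : ∃ q', q = q' + 1 := ⟨q - 1, by omega⟩
  have hq_len : q + 1 ≤ w.length := by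
    by_contra! h
    have := hbelow q (by omega) (by omega)
    rw [w.getVert_of_length_le (by omega : w.length ≤ q)] at this
    rw [w.getVert_of_length_le h.le] at hq
    omega
  have hp_vert := horoball_fst_getVert_succ_eq_of_snd_ne w (r := p)
    (by have := hbelow (p + 1) (by omega) (by omega); omega)
  have hq_vert := horoball_fst_getVert_succ_eq_of_snd_ne w (r := q)
    (by have := hbelow q (by omega) (by omega); omega)
  have hshadow : Λ.dist (w.getVert p).1 (w.getVert (q + 1)).1 ≤ (q - (p + 1)) * 2 ^ (n + 1) := by
    rw [hp_vert, ← hq_vert]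
    refine (horoball_dist_fst_getVert_le_of_snd_le w hΛ (by omega) fun r h₁ h₂ => ?_).trans
      (Nat.mul_le_mul_left _ (Nat.pow_le_pow_right two_pos n.le_succ))
    exact Nat.lt_succ_iff.mp (hbelow r (by omega) (by omega))
  have hshort := horoball_dist_le_of_dist_le hΛ hshadow
  rw [show ((w.getVert p).1, n + 1) = w.getVert p from Prod.ext rfl hp.symm,
    show ((w.getVert (q + 1)).1, n + 1) = w.getVert (q + 1) from Prod.ext rfl hq.symm,
    w.dist_getVert_getVert_of_length_eq_dist hgeo (by omega) hq_len] at hshort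
  omega
end

section
/- If X is a strongly shortcut metric space, then there exists L > 1 such that any metric space Y admitting, for some C > 0 and some scaling factor t > 0, a map f : Y → X with t·d_Y(y,y')/L − C ≤ d_X(f(y),f(y')) ≤ L·t·d_Y(y,y') + C and C-dense image, is also strongly shortcut. -/
/-!
Bilipschitz embeddings of large rescaled cycles push forward along a quasi-isometry up to scaling:
if `g` embeds `l · Cₙ` into `Y` with constant `K'`, then `f ∘ g` embeds `t l · Cₙ` into `X`
with constant roughly `L K'`, the additive error `C` being absorbed once `t l` is large because
distinct cycle vertices are at distance at least `l`. Choosing `L K' < K` for the constant `K`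
of `X` shows that `Y` is strongly shortcut with constant `K'`.
-/

open Filter

def cycDist (n i j : ℕ) : ℕ :=
  min (max i j - min i j) (n - (max i j - min i j))

def StronglyShortcutSpace (X : Type*) [MetricSpace X] : Prop :=
  ∃ K : ℝ, 1 < K ∧ ∃ n : ℕ, 3 ≤ n ∧ ∃ M : ℝ, 0 < M ∧ ∀ l : ℝ, M ≤ l →
    ¬ ∃ f : Fin n → X, ∀ i j : Fin n,
      l * (cycDist n i.1 j.1 : ℝ) / K ≤ dist (f i) (f j) ∧
      dist (f i) (f j) ≤ K * (l * (cycDist n i.1 j.1 : ℝ))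

@[simp]
lemma cycDist_self (n i : ℕ) : cycDist n i i = 0 := by
  simp [cycDist]

lemma one_le_cycDist {n i j : ℕ} (hi : i < n) (hj : j < n) (hij : i ≠ j) :
    1 ≤ cycDist n i j := by
  unfold cycDist
  omega

def ScaledCycleEmbedding {X : Type*} [MetricSpace X] {n : ℕ} (K l : ℝ) (g : Fin n → X) :
    Prop :=
  ∀ i j : Fin n,
    l * (cycDist n i.1 j.1 : ℝ) / K ≤ dist (g i) (g j) ∧
    dist (g i) (g j) ≤ K * (l * (cycDist n i.1 j.1 : ℝ))

lemma stronglyShortcutSpace_iff_eventually (X : Type*) [MetricSpace X] :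
    StronglyShortcutSpace X ↔ ∃ K : ℝ, 1 < K ∧ ∃ n : ℕ, 3 ≤ n ∧
      ∀ᶠ l in atTop, ∀ g : Fin n → X, ¬ ScaledCycleEmbedding K l g := by
  constructor
  · rintro ⟨K, hK, n, hn, M, -, hM⟩
    exact ⟨K, hK, n, hn, eventually_atTop.2 ⟨M, fun l hl g hg => hM l hl ⟨g, hg⟩⟩⟩
  · rintro ⟨K, hK, n, hn, hev⟩
    obtain ⟨M, hM⟩ := eventually_atTop.1 hev
    refine ⟨K, hK, n, hn, max M 1, by positivity, fun l hl ⟨g, hg⟩ => ?_⟩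
    exact hM l (le_of_max_le_left hl) g hg

lemma div_le_and_le_mul_of_quasi_bounds {K L K' C s u D : ℝ} (hL : 0 < L) (hK' : 0 < K')
    (hlow : C ≤ (1 / (L * K') - 1 / K) * s) (hup : C ≤ (K - L * K') * s)
    (hu : s / K' ≤ u ∧ u ≤ K' * s) (hD : u / L - C ≤ D ∧ D ≤ L * u + C) :
    s / K ≤ D ∧ D ≤ K * s := by
  constructor
  · calc s / K = s / K' / L - (1 / (L * K') - 1 / K) * s := by field_simp; ring
      _ ≤ u / L - C := by gcongr; exact hu.1
      _ ≤ D := hD.1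
  · calc D ≤ L * u + C := hD.2
      _ ≤ L * (K' * s) + C := by gcongr; exact hu.2
      _ ≤ K * s := by linarith

section

variable {X Y : Type*} [MetricSpace X] [MetricSpace Y]

lemma ScaledCycleEmbedding.comp {n : ℕ} {f : Y → X} {g : Fin n → Y} {K L K' C t l : ℝ}
    (hL : 0 < L) (hK' : 0 < K') (ht : 0 < t) (hC : 0 ≤ C)
    (hlow : C ≤ (1 / (L * K') - 1 / K) * (t * l)) (hup : C ≤ (K - L * K') * (t * l))
    (hf : ∀ y y' : Y, t * dist y y' / L - C ≤ dist (f y) (f y') ∧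
      dist (f y) (f y') ≤ L * (t * dist y y') + C)
    (hg : ScaledCycleEmbedding K' l g) : ScaledCycleEmbedding K (t * l) (f ∘ g) := by
  intro i j
  rcases eq_or_ne i j with rfl | hij
  · simp
  have hc : (1 : ℝ) ≤ cycDist n i.1 j.1 := by
    exact_mod_cast one_le_cycDist i.2 j.2 (Fin.val_ne_of_ne hij)
  -- distinct vertices lie at distance `≥ l`, so the smallness of `C` persists after scaling
  have scale {a : ℝ} (h : C ≤ a * (t * l)) : C ≤ a * (t * l * cycDist n i.1 j.1) := by
    rw [← mul_assoc]
    exact h.trans (le_mul_of_one_le_right (hC.trans h) hc)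
  obtain ⟨hg₁, hg₂⟩ := hg i j
  refine div_le_and_le_mul_of_quasi_bounds (u := t * dist (g i) (g j)) hL hK'
    (scale hlow) (scale hup) ⟨?_, ?_⟩ ?_
  · rw [mul_assoc, mul_div_assoc]
    exact mul_le_mul_of_nonneg_left hg₁ ht.le
  · rw [mul_assoc, mul_left_comm]
    exact mul_le_mul_of_nonneg_left hg₂ ht.le
  · exact hf (g i) (g j)

lemma stronglyShortcutSpace_of_quasi_bounds {K L C t : ℝ} {n : ℕ} (hn : 3 ≤ n)
    (hX : ∀ᶠ l in atTop, ∀ g : Fin n → X, ¬ ScaledCycleEmbedding K l g)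
    (hL : 0 < L) (hLK : L < K) (hC : 0 ≤ C) (ht : 0 < t) (f : Y → X)
    (hf : ∀ y y' : Y, t * dist y y' / L - C ≤ dist (f y) (f y') ∧
      dist (f y) (f y') ≤ L * (t * dist y y') + C) :
    StronglyShortcutSpace Y := by
  set K' := (1 + K / L) / 2 with hK'_def
  have hK' : 1 < K' := by
    have : 1 < K / L := (one_lt_div hL).2 hLK
    linarith
  have hLK' : L * K' = (L + K) / 2 := by rw [hK'_def]; field_simp
  have ha : 0 < 1 / (L * K') - 1 / K :=
    sub_pos.2 (one_div_lt_one_div_of_lt (by positivity) (by linarith))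
  have hb : 0 < K - L * K' := by linarith
  have htl : Tendsto (t * ·) atTop atTop := tendsto_id.const_mul_atTop ht
  refine (stronglyShortcutSpace_iff_eventually Y).2 ⟨K', hK', n, hn, ?_⟩
  filter_upwards [htl.eventually hX, htl.eventually (eventually_ge_atTop (C / _)),
    htl.eventually (eventually_ge_atTop (C / _))] with l hXl hlow hup g hg
  exact hXl _ (hg.comp hL (by positivity) ht hC ((div_le_iff₀' ha).1 hlow)
    ((div_le_iff₀' hb).1 hup) hf)

end

/-- If `X` is a strongly shortcut metric space then there is an `L > 1` such that any
metric space `Y` admitting, for some `C > 0` and scaling factor `t > 0`, an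
`(L,C)`-quasi-isometry up to scaling `f : Y → X` (i.e. `t·d(y,y')/L − C ≤
d(f y, f y') ≤ L·t·d(y,y') + C` with `C`-dense image) is also strongly shortcut. -/
theorem stronglyShortcut_of_quasiIsometry_up_to_scaling (X : Type*) [MetricSpace X]
    (hX : StronglyShortcutSpace X) :
    ∃ L : ℝ, 1 < L ∧ ∀ (Y : Type) [MetricSpace Y], ∀ (C t : ℝ) (f : Y → X),
      0 < C → 0 < t →
      (∀ y y' : Y, t * dist y y' / L - C ≤ dist (f y) (f y') ∧
        dist (f y) (f y') ≤ L * (t * dist y y') + C) →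
      (∀ x : X, ∃ y : Y, dist x (f y) ≤ C) →
      StronglyShortcutSpace Y := by
  obtain ⟨K, hK, n, hn, hev⟩ := (stronglyShortcutSpace_iff_eventually X).1 hX
  refine ⟨(K + 1) / 2, by linarith, fun Y _ C t f hC ht hf _ => ?_⟩
  exact stronglyShortcutSpace_of_quasi_bounds hn hev (by linarith) (by linarith) hC.le ht f hf
end

section
/- Every Gromov-hyperbolic geodesic metric space is strongly shortcut: if X is δ-hyperbolic, there exist K > 1, n ∈ ℕ, and M > 0 such that no K-bilipschitz copy of the rescaled n-cycle vertex set (C_n⁰, λ d_{C_n}) with λ ≥ M embeds in X. -/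
open Set

/-- `f` is a geodesic from `x` to `y`, parametrized by arc length on
`[0, dist x y]`. -/
def IsGeodesicFrom {X : Type*} [MetricSpace X] (f : ℝ → X) (x y : X) : Prop :=
  f 0 = x ∧ f (dist x y) = y ∧
    ∀ s t : ℝ, s ∈ Icc 0 (dist x y) → t ∈ Icc 0 (dist x y) → dist (f s) (f t) = |s - t|

/-- A geodesic metric space: any two points are joined by a geodesic. -/
def GeodesicSpace (X : Type*) [MetricSpace X] : Prop :=
  ∀ x y : X, ∃ f : ℝ → X, IsGeodesicFrom f x y

/-- `X` is `δ`-hyperbolic: every geodesic triangle is `δ`-thin, i.e. each side is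
contained in the `δ`-neighbourhood of the union of the other two sides. -/
def GromovHyperbolic (X : Type*) [MetricSpace X] (δ : ℝ) : Prop :=
  ∀ x y z : X, ∀ f g h : ℝ → X,
    IsGeodesicFrom f x y → IsGeodesicFrom g y z → IsGeodesicFrom h x z →
    ∀ s ∈ Icc (0 : ℝ) (dist x y), ∃ u : X,
      u ∈ g '' Icc (0 : ℝ) (dist y z) ∪ h '' Icc (0 : ℝ) (dist x z) ∧ dist (f s) u ≤ δ

/-!
In a geodesic square `a b c d`, thinness of the triangles `a c b` and `a c d` puts the midpoint `m`
of a diagonal `[a, c]` within `max (|ab|, |bc|) - |ac|/2 + 2δ` of `b`, and symmetrically for `d`.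
Going through `m` bounds the other diagonal, which yields the four-point inequality
`|ac| + |bd| ≤ max (|ab|, |bc|) + max (|cd|, |da|) + 4δ`. A `K`-bilipschitz copy of the
`l`-scaled 4-cycle has sides at most `K l` and diagonals at least `2 l / K`, so for `K = 6/5` the
inequality forces `l ≤ 30 δ / 7`.
-/

namespace IsGeodesicFrom

variable {X : Type*} [MetricSpace X] {f : ℝ → X} {x y : X} {s : ℝ}

theorem dist_left (hf : IsGeodesicFrom f x y) (hs : s ∈ Icc 0 (dist x y)) :
    dist x (f s) = s := by
  rw [← hf.1, hf.2.2 0 s ⟨le_rfl, dist_nonneg⟩ hs, zero_sub, abs_neg, abs_of_nonneg hs.1]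

theorem dist_right (hf : IsGeodesicFrom f x y) (hs : s ∈ Icc 0 (dist x y)) :
    dist (f s) y = dist x y - s := by
  conv_lhs => rw [← hf.2.1]
  rw [hf.2.2 s (dist x y) hs ⟨dist_nonneg, le_rfl⟩, abs_of_nonpos (by linarith [hs.2])]
  ring

end IsGeodesicFrom

namespace GromovHyperbolic

variable {X : Type*} [MetricSpace X] {δ : ℝ}

/-- The thin-triangle condition for the triangle `a c b`, read at the point of `[a, c]` at
distance `s` from `a`. -/
theorem dist_le_max_sub_add (hhyp : GromovHyperbolic X δ) (hgeo : GeodesicSpace X)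
    {a b c : X} {γ : ℝ → X} (hγ : IsGeodesicFrom γ a c) {s : ℝ}
    (hs : s ∈ Icc 0 (dist a c)) :
    dist (γ s) b ≤ max (dist a b - s) (dist c b - (dist a c - s)) + 2 * δ := by
  obtain ⟨g, hg⟩ := hgeo c b
  obtain ⟨h, hh⟩ := hgeo a b
  obtain ⟨u, hu, hsu⟩ := hhyp a c b γ g h hγ hg hh s hs
  rcases hu with ⟨t, ht, rfl⟩ | ⟨t, ht, rfl⟩
  · have hct : dist c (γ s) ≤ dist c (g t) + dist (γ s) (g t) := dist_triangle_right _ _ _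
    rw [dist_comm, hγ.dist_right hs, hg.dist_left ht] at hct
    have hsb := dist_triangle (γ s) (g t) b
    rw [hg.dist_right ht] at hsb
    linarith [le_max_right (dist a b - s) (dist c b - (dist a c - s))]
  · have hat : dist a (γ s) ≤ dist a (h t) + dist (γ s) (h t) := dist_triangle_right _ _ _
    rw [hγ.dist_left hs, hh.dist_left ht] at hat
    have hsb := dist_triangle (γ s) (h t) b
    rw [hh.dist_right ht] at hsb
    linarith [le_max_left (dist a b - s) (dist c b - (dist a c - s))]

theorem dist_add_dist_le (hhyp : GromovHyperbolic X δ) (hgeo : GeodesicSpace X) (a b c d : X) :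
    dist a c + dist b d ≤ max (dist a b) (dist b c) + max (dist c d) (dist d a) + 4 * δ := by
  obtain ⟨γ, hγ⟩ := hgeo a c
  have hmid : dist a c / 2 ∈ Icc 0 (dist a c) :=
    ⟨by positivity, by linarith [dist_nonneg (x := a) (y := c)]⟩
  have hb := hhyp.dist_le_max_sub_add hgeo (b := b) hγ hmid
  have hd := hhyp.dist_le_max_sub_add hgeo (b := d) hγ hmid
  have hbd := dist_triangle_left b d (γ (dist a c / 2))
  have hmax_b : max (dist a b - dist a c / 2) (dist c b - (dist a c - dist a c / 2)) =
      max (dist a b) (dist b c) - dist a c / 2 := by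
    rw [dist_comm c b, ← max_sub_sub_right]; ring_nf
  have hmax_d : max (dist a d - dist a c / 2) (dist c d - (dist a c - dist a c / 2)) =
      max (dist c d) (dist d a) - dist a c / 2 := by
    rw [dist_comm a d, max_comm, ← max_sub_sub_right]; ring_nf
  linarith

end GromovHyperbolic

/-- Every Gromov-hyperbolic geodesic metric space is strongly shortcut: if `X` is
`δ`-hyperbolic there exist `K > 1`, `n ≥ 3` and `M > 0` such that no `K`-bilipschitz
copy of the rescaled `n`-cycle vertex set `(C_n⁰, λ d_{C_n})` with `λ ≥ M` embeds
in `X`. -/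
theorem hyperbolic_implies_stronglyShortcut (X : Type*) [MetricSpace X] (δ : ℝ)
    (hδ : 0 ≤ δ) (hgeo : GeodesicSpace X) (hhyp : GromovHyperbolic X δ) :
    ∃ K : ℝ, 1 < K ∧ ∃ n : ℕ, 3 ≤ n ∧ ∃ M : ℝ, 0 < M ∧ ∀ l : ℝ, M ≤ l →
      ¬ ∃ f : Fin n → X, ∀ i j : Fin n,
        l * (cycDist n i.1 j.1 : ℝ) / K ≤ dist (f i) (f j) ∧
        dist (f i) (f j) ≤ K * (l * (cycDist n i.1 j.1 : ℝ)) := by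
  refine ⟨6 / 5, by norm_num, 4, by norm_num, 5 * (δ + 1), by positivity, ?_⟩
  rintro l hl ⟨f, hf⟩
  have side (i j : Fin 4) (hij : cycDist 4 i j = 1) : dist (f i) (f j) ≤ 6 / 5 * l := by
    simpa [hij] using (hf i j).2
  have diagonal (i j : Fin 4) (hij : cycDist 4 i j = 2) : 5 / 3 * l ≤ dist (f i) (f j) := by
    have := (hf i j).1
    rw [hij] at this
    linarith
  have h := hhyp.dist_add_dist_le hgeo (f 0) (f 1) (f 2) (f 3)
  have h01 := side 0 1 rfl
  have h12 := side 1 2 rfl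
  have h23 := side 2 3 rfl
  have h30 := side 3 0 rfl
  have h02 := diagonal 0 2 rfl
  have h13 := diagonal 1 3 rfl
  linarith [max_le h01 h12, max_le h23 h30]
end

section
/- Let X be a complete geodesic metric space that is tree-graded with respect to a collection P of pieces. Then every isometrically embedded Riemannian circle (an isometric copy of ℝ/ℓℤ with its quotient geodesic metric, for some ℓ > 0) in X is contained in a single piece. -/
/-!
Split the circle `ℝ/ℓℤ` at `0`, `ℓ/3` and `2ℓ/3` into three arcs of length `ℓ/3`. An interval
of length at most `ℓ/2` maps isometrically onto its arc, so under the isometry `e` the arcs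
become geodesic sides of a triangle; two arcs in a window shorter than `ℓ` meet only at a
shared endpoint, so the triangle is simple and non-degenerate. Tree-gradedness puts it in a
piece, and the three sides cover the image of `e`.
-/

open Set

/-- A subset `A` of a metric space is geodesic if any two of its points are joined by
a geodesic contained in `A`. -/
def IsGeodesicSubset {X : Type*} [MetricSpace X] (A : Set X) : Prop :=
  ∀ x ∈ A, ∀ y ∈ A, ∃ f : ℝ → X, IsGeodesicFrom f x y ∧
    ∀ s ∈ Icc (0 : ℝ) (dist x y), f s ∈ A


section Geodesic

variable {X : Type*} [MetricSpace X]

lemma IsGeodesicFrom.injOn {f : ℝ → X} {x y : X} (hf : IsGeodesicFrom f x y) :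
    InjOn f (Icc 0 (dist x y)) := fun s hs u hu hsu => by
  have h := hf.2.2 s u hs hu
  rwa [hsu, dist_self, eq_comm, abs_eq_zero, sub_eq_zero] at h

lemma isGeodesicFrom_of_dist_eq {γ : ℝ → X} {x y : X} {d : ℝ} (hd : 0 ≤ d) (hx : γ 0 = x)
    (hy : γ d = y) (hγ : ∀ s ∈ Icc 0 d, ∀ u ∈ Icc 0 d, dist (γ s) (γ u) = |s - u|) :
    IsGeodesicFrom γ x y := by
  have hxy : dist x y = d := by
    rw [← hx, ← hy, hγ 0 ⟨le_rfl, hd⟩ d ⟨hd, le_rfl⟩, zero_sub, abs_neg, abs_of_nonneg hd]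
  refine ⟨hx, by rw [hxy, hy], fun s u hs hu => ?_⟩
  rw [hxy] at hs hu
  exact hγ s hs u hu

end Geodesic

namespace AddCircle

variable {ℓ : ℝ}

lemma image_coe_Icc_add_period (a b : ℝ) :
    ((↑) : ℝ → AddCircle ℓ) '' Icc (a + ℓ) (b + ℓ) = (↑) '' Icc a b := by
  rw [← image_add_const_Icc, image_image]
  simp only [coe_add_period]

lemma image_coe_add_Icc {Y : Type*} (e : AddCircle ℓ → Y) (a b : ℝ) :
    (fun s => e ↑(a + s)) '' Icc 0 (b - a) = e '' ((↑) '' Icc a b) := by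
  rw [← image_image, ← image_image (fun s : ℝ => (s : AddCircle ℓ)), image_const_add_Icc,
    add_zero, add_sub_cancel]

lemma image_coe_sub_Icc {Y : Type*} (e : AddCircle ℓ → Y) (a b : ℝ) :
    (fun s => e ↑(b - s)) '' Icc 0 (b - a) = e '' ((↑) '' Icc a b) := by
  have hab : Icc a b = (fun s => b - s) '' Icc 0 (b - a) := by
    ext s
    simp only [mem_image, mem_Icc]
    exact ⟨fun hs => ⟨b - s, ⟨by linarith, by linarith⟩, by ring⟩,
      fun ⟨u, hu, hs⟩ => ⟨by linarith, by linarith⟩⟩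
  rw [hab, image_image, image_image]

variable [Fact (0 < ℓ)]

lemma dist_coe_of_abs_sub_le {u v : ℝ} (h : |u - v| ≤ ℓ / 2) :
    dist (u : AddCircle ℓ) v = |u - v| := by
  rwa [dist_eq_norm, ← coe_sub, norm_coe_eq_abs_iff ℓ (Fact.out : 0 < ℓ).ne',
    abs_of_pos (Fact.out : 0 < ℓ)]

lemma image_coe_Icc_inter_image_coe_Icc {a b c : ℝ} (hab : a ≤ b) (hbc : b ≤ c)
    (hca : c < a + ℓ) :
    ((↑) : ℝ → AddCircle ℓ) '' Icc a b ∩ (↑) '' Icc b c = {(b : AddCircle ℓ)} := by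
  refine Subset.antisymm ?_ <| singleton_subset_iff.2
    ⟨⟨b, ⟨hab, le_rfl⟩, rfl⟩, ⟨b, ⟨le_rfl, hbc⟩, rfl⟩⟩
  rintro _ ⟨⟨u, hu, rfl⟩, ⟨v, hv, huv⟩⟩
  have hvu : v = u := (coe_eq_coe_iff_of_mem_Ico (a := a)
    ⟨by linarith [hv.1], by linarith [hv.2]⟩ ⟨hu.1, by linarith [hu.2]⟩).1 huv
  rw [mem_singleton_iff, le_antisymm hu.2 (hvu ▸ hv.1)]

lemma image_coe_Icc_inter_image_coe_Icc_add_period {a b c : ℝ} (hab : a ≤ b) (hbc : b < c)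
    (hca : c ≤ a + ℓ) :
    ((↑) : ℝ → AddCircle ℓ) '' Icc a b ∩ (↑) '' Icc c (a + ℓ) = {(a : AddCircle ℓ)} := by
  rw [← sub_add_cancel c ℓ, image_coe_Icc_add_period, inter_comm]
  exact image_coe_Icc_inter_image_coe_Icc (by linarith) hab (by linarith)

end AddCircle

namespace Isometry

open AddCircle

variable {X : Type*} [MetricSpace X] {ℓ : ℝ} [Fact (0 < ℓ)] {e : AddCircle ℓ → X}

lemma dist_coe_coe (he : Isometry e) {a b : ℝ} (hab : a ≤ b) (hba : b ≤ a + ℓ / 2) :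
    dist (e a) (e b) = b - a := by
  rw [he.dist_eq, dist_comm, dist_coe_of_abs_sub_le] <;> rw [abs_of_nonneg (by linarith)]
  linarith

lemma isGeodesicFrom_coe_add (he : Isometry e) {a b : ℝ} (hab : a ≤ b) (hba : b ≤ a + ℓ / 2) :
    IsGeodesicFrom (fun s => e ↑(a + s)) (e a) (e b) := by
  refine isGeodesicFrom_of_dist_eq (sub_nonneg.2 hab) (by simp) (by simp) fun s hs u hu => ?_
  rw [he.dist_eq, dist_coe_of_abs_sub_le] <;> rw [add_sub_add_left_eq_sub]
  exact abs_le.2 ⟨by linarith [hs.1, hu.2], by linarith [hs.2, hu.1]⟩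

lemma isGeodesicFrom_coe_sub (he : Isometry e) {a b : ℝ} (hab : a ≤ b) (hba : b ≤ a + ℓ / 2) :
    IsGeodesicFrom (fun s => e ↑(b - s)) (e b) (e a) := by
  refine isGeodesicFrom_of_dist_eq (sub_nonneg.2 hab) (by simp) (by simp) fun s hs u hu => ?_
  rw [he.dist_eq, dist_coe_of_abs_sub_le] <;> rw [sub_sub_sub_cancel_left, abs_sub_comm]
  exact abs_le.2 ⟨by linarith [hs.1, hu.2], by linarith [hs.2, hu.1]⟩

end Isometry

open AddCircle in
theorem circle_in_piece_of_tree_graded_general (X : Type*) [MetricSpace X] (P : Set (Set X))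
    (htri : ∀ x y z : X, ∀ f g h : ℝ → X,
      IsGeodesicFrom f x y → IsGeodesicFrom g y z → IsGeodesicFrom h x z →
      x ≠ y → y ≠ z → x ≠ z →
      InjOn f (Icc 0 (dist x y)) → InjOn g (Icc 0 (dist y z)) →
      InjOn h (Icc 0 (dist x z)) →
      f '' Icc 0 (dist x y) ∩ g '' Icc 0 (dist y z) = {y} →
      g '' Icc 0 (dist y z) ∩ h '' Icc 0 (dist x z) = {z} →
      f '' Icc 0 (dist x y) ∩ h '' Icc 0 (dist x z) = {x} →
      ∃ A ∈ P, f '' Icc 0 (dist x y) ∪ g '' Icc 0 (dist y z) ∪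
        h '' Icc 0 (dist x z) ⊆ A)
    (ℓ : ℝ) (hℓ : 0 < ℓ) (e : AddCircle ℓ → X) (he : Isometry e) :
    ∃ A ∈ P, range e ⊆ A := by
  obtain ⟨t, ht, rfl⟩ : ∃ t > 0, ℓ = 3 * t := ⟨ℓ / 3, by positivity, by ring⟩
  have : Fact (0 < 3 * t) := ⟨hℓ⟩
  have hf := he.isGeodesicFrom_coe_add (a := 0) (b := t) (by linarith) (by linarith)
  have hg := he.isGeodesicFrom_coe_add (a := t) (b := 2 * t) (by linarith) (by linarith)
  have hh := he.isGeodesicFrom_coe_sub (a := 2 * t) (b := 0 + 3 * t) (by linarith) (by linarith)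
  have dxy := he.dist_coe_coe (a := 0) (b := t) (by linarith) (by linarith)
  have dyz := he.dist_coe_coe (a := t) (b := 2 * t) (by linarith) (by linarith)
  have dxz := he.dist_coe_coe (a := 2 * t) (b := 0 + 3 * t) (by linarith) (by linarith)
  rw [coe_add_period] at hh
  rw [dist_comm, coe_add_period] at dxz
  obtain ⟨A, hA, hsub⟩ := htri _ _ _ _ _ _ hf hg hh
    (dist_pos.1 (by rw [dxy]; linarith)) (dist_pos.1 (by rw [dyz]; linarith))
    (dist_pos.1 (by rw [dxz]; linarith)) hf.injOn hg.injOn hh.injOn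
    (by rw [dxy, dyz, image_coe_add_Icc, image_coe_add_Icc, ← image_inter he.injective,
      image_coe_Icc_inter_image_coe_Icc (by linarith) (by linarith) (by linarith),
      image_singleton])
    (by rw [dyz, dxz, image_coe_add_Icc, image_coe_sub_Icc, ← image_inter he.injective,
      image_coe_Icc_inter_image_coe_Icc (by linarith) (by linarith) (by linarith),
      image_singleton])
    (by rw [dxy, dxz, image_coe_add_Icc, image_coe_sub_Icc, ← image_inter he.injective,
      image_coe_Icc_inter_image_coe_Icc_add_period (by linarith) (by linarith) (by linarith),
      image_singleton])
  refine ⟨A, hA, ?_⟩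
  rwa [dxy, dyz, dxz, image_coe_add_Icc, image_coe_add_Icc, image_coe_sub_Icc, ← image_union,
    ← image_union, ← image_union, ← image_union, Icc_union_Icc_eq_Icc (by linarith) (by linarith),
    Icc_union_Icc_eq_Icc (by linarith) (by linarith), coe_image_Icc_eq, image_univ] at hsub

/-- In a complete geodesic metric space `X` that is tree-graded with respect to a
collection `P` of pieces (closed geodesic subsets, any two of which meet in at most a
point, such that every nontrivial simple geodesic triangle lies in a piece), every
isometrically embedded Riemannian circle `ℝ/ℓℤ` (for any `ℓ > 0`) is contained in a
single piece. -/
theorem circle_in_piece_of_tree_graded (X : Type*) [MetricSpace X] [CompleteSpace X]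
    (hgeo : GeodesicSpace X) (P : Set (Set X))
    (hclosed : ∀ A ∈ P, IsClosed A)
    (hgeod : ∀ A ∈ P, IsGeodesicSubset A)
    (hmeet : ∀ A ∈ P, ∀ B ∈ P, A ≠ B → (A ∩ B).Subsingleton)
    (htri : ∀ x y z : X, ∀ f g h : ℝ → X,
      IsGeodesicFrom f x y → IsGeodesicFrom g y z → IsGeodesicFrom h x z →
      x ≠ y → y ≠ z → x ≠ z →
      InjOn f (Icc 0 (dist x y)) → InjOn g (Icc 0 (dist y z)) →
      InjOn h (Icc 0 (dist x z)) →
      f '' Icc 0 (dist x y) ∩ g '' Icc 0 (dist y z) = {y} →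
      g '' Icc 0 (dist y z) ∩ h '' Icc 0 (dist x z) = {z} →
      f '' Icc 0 (dist x y) ∩ h '' Icc 0 (dist x z) = {x} →
      ∃ A ∈ P, f '' Icc 0 (dist x y) ∪ g '' Icc 0 (dist y z) ∪
        h '' Icc 0 (dist x z) ⊆ A)
    (ℓ : ℝ) (hℓ : 0 < ℓ) (e : AddCircle ℓ → X) (he : Isometry e) :
    ∃ A ∈ P, range e ⊆ A :=
  circle_in_piece_of_tree_graded_general X P htri ℓ hℓ e he
end
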